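/- For every real λ ≠ 0 the ratio of successive perturbative terms satisfies |u_{k+1}(λ)/u_k(λ)| = (1/(k+1))·((2k+3/2)(2k+1/2)/6)·|λ|, which tends to +∞ as k → ∞; consequently |u_k(λ)| → ∞ and the perturbative series Σ_{k=0}^∞ u_k(λ) diverges for every real λ ≠ 0. -/

import Mathlib

/-! Applying `Γ(z + 1) = z Γ(z)` twice gives
`u_{k+1} / u_k = -(2k + 3/2)(2k + 1/2) λ / (6(k + 1))`, which grows linearly in `k`.
Eventually every term is therefore at least twice the previous one in absolute value, so the
terms blow up, whereas the terms of a convergent series are the increments of its partial sums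
and tend to `0`. -/

open MeasureTheory

noncomputable section

/-- The k-th term of the perturbative expansion of `Z`. -/
def u (k : ℕ) (lam : ℝ) : ℝ :=
  (1 / Real.sqrt Real.pi) * ((-1) ^ k / (Nat.factorial k : ℝ)) *
    Real.Gamma (1 / 2 + 2 * k) * (lam / 6) ^ k

open Filter Topology

theorem tendsto_atTop_of_tendsto_div_atTop {a : ℕ → ℝ} (ha : ∀ n, 0 < a n)
    (h : Tendsto (fun n => a (n + 1) / a n) atTop atTop) : Tendsto a atTop atTop := by
  obtain ⟨N, hN⟩ := (h.eventually_ge_atTop 2).exists_forall_of_atTop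
  refine (tendsto_add_atTop_iff_nat N).1 (tendsto_atTop_of_geom_le (ha _) one_lt_two fun n => ?_)
  have := hN (n + N) (Nat.le_add_left N n)
  rw [le_div_iff₀ (ha _)] at this
  simpa only [Nat.add_right_comm n 1 N] using this

theorem tendsto_zero_of_tendsto_sum_range {G : Type*} [AddCommGroup G] [TopologicalSpace G]
    [IsTopologicalAddGroup G] {f : ℕ → G} {L : G}
    (h : Tendsto (fun n => ∑ k ∈ Finset.range n, f k) atTop (𝓝 L)) : Tendsto f atTop (𝓝 0) := by
  have := ((tendsto_add_atTop_iff_nat 1).2 h).sub h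
  simpa only [Finset.sum_range_succ, add_sub_cancel_left, sub_self] using this

theorem u_ne_zero (k : ℕ) {lam : ℝ} (hlam : lam ≠ 0) : u k lam ≠ 0 := by
  have hGamma : Real.Gamma (1 / 2 + 2 * k) ≠ 0 := (Real.Gamma_pos_of_pos (by positivity)).ne'
  unfold u
  positivity

theorem u_succ (k : ℕ) (lam : ℝ) :
    u (k + 1) lam =
      -((1 / ((k : ℝ) + 1)) * ((2 * (k : ℝ) + 3 / 2) * (2 * (k : ℝ) + 1 / 2) / 6) * lam) *
        u k lam := by
  have hGamma : Real.Gamma (1 / 2 + 2 * ((k + 1 : ℕ) : ℝ)) =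
      (2 * k + 3 / 2) * (2 * k + 1 / 2) * Real.Gamma (1 / 2 + 2 * k) := by
    rw [show 1 / 2 + 2 * ((k + 1 : ℕ) : ℝ) = (1 / 2 + 2 * k + 1) + 1 by push_cast; ring,
      Real.Gamma_add_one (by positivity), Real.Gamma_add_one (by positivity)]
    ring
  unfold u
  rw [hGamma, Nat.factorial_succ]
  push_cast
  field_simp
  ring

theorem abs_u_succ_div_u (k : ℕ) {lam : ℝ} (hlam : lam ≠ 0) :
    |u (k + 1) lam / u k lam| =
      (1 / ((k : ℝ) + 1)) * ((2 * (k : ℝ) + 3 / 2) * (2 * (k : ℝ) + 1 / 2) / 6) * |lam| := by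
  rw [u_succ, mul_div_cancel_right₀ _ (u_ne_zero k hlam), abs_neg, abs_mul,
    abs_of_pos (by positivity)]

theorem tendsto_abs_u_succ_div_u {lam : ℝ} (hlam : lam ≠ 0) :
    Tendsto (fun k : ℕ => |u (k + 1) lam / u k lam|) atTop atTop := by
  have hbound (k : ℕ) : 2 / 3 * (k : ℝ) * |lam| ≤ |u (k + 1) lam / u k lam| := by
    rw [abs_u_succ_div_u k hlam]
    gcongr ?_ * _
    rw [one_div, inv_mul_eq_div, le_div_iff₀ (by positivity)]
    nlinarith
  refine tendsto_atTop_mono hbound ?_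
  exact (tendsto_natCast_atTop_atTop.const_mul_atTop (by norm_num)).atTop_mul_const
    (abs_pos.2 hlam)

/-- The ratio of successive perturbative terms grows without bound, the terms blow up,
and the perturbative series diverges for every real `λ ≠ 0`. -/
theorem perturbative_series_diverges (lam : ℝ) (hlam : lam ≠ 0) :
    (∀ k : ℕ, |u (k + 1) lam / u k lam| =
      (1 / ((k : ℝ) + 1)) * ((2 * (k : ℝ) + 3 / 2) * (2 * (k : ℝ) + 1 / 2) / 6) * |lam|) ∧
    Filter.Tendsto (fun k : ℕ => |u (k + 1) lam / u k lam|) Filter.atTop Filter.atTop ∧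
    Filter.Tendsto (fun k : ℕ => |u k lam|) Filter.atTop Filter.atTop ∧
    ¬ ∃ L : ℝ, Filter.Tendsto (fun n : ℕ => ∑ k ∈ Finset.range n, u k lam)
      Filter.atTop (nhds L) := by
  have hratio := tendsto_abs_u_succ_div_u hlam
  have habs : Tendsto (fun k : ℕ => |u k lam|) atTop atTop := by
    refine tendsto_atTop_of_tendsto_div_atTop (fun k => abs_pos.2 (u_ne_zero k hlam)) ?_
    simpa only [abs_div] using hratio
  refine ⟨fun k => abs_u_succ_div_u k hlam, hratio, habs, ?_⟩
  rintro ⟨L, hL⟩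
  have hzero : Tendsto (fun k : ℕ => |u k lam|) atTop (𝓝 0) := by
    simpa only [abs_zero] using (tendsto_zero_of_tendsto_sum_range hL).abs
  exact not_tendsto_nhds_of_tendsto_atTop habs 0 hzero
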